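/- arXiv:2402.02702 — 3 statements merged into one kernel-verified Lean document; each statement's English description precedes it below -/
import Mathlib

section
/- Identification under the transportability condition for difference effect measures (Theorem in Supplement G): under conditions (A1), (A2), (A3), (A4*), (A5) and (A6), E[Y¹ | S = 0] = E[ μ₁₁(X) | S = 0 ] = P(S=0)⁻¹ · E[ S · τ(X) · (A/q(X)) · Y ]. -/
open MeasureTheory

/-- `m` is a version of the conditional expectation `E[Z ∣ X; B]`. -/
def IsVersion {Ω E : Type*} [MeasurableSpace Ω] [MeasurableSpace E]
    (P : Measure Ω) (X : Ω → E) (Z : Ω → ℝ) (B : Set Ω) (m : E → ℝ) : Prop :=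
  Measurable m ∧
    ∀ h : E → ℝ, Measurable h → (∃ C, ∀ x, |h x| ≤ C) →
      ∫ ω in B, Z ω * h (X ω) ∂P = ∫ ω in B, m (X ω) * h (X ω) ∂P

/-- Conditional mean `E[Z ∣ B]` of a real random variable given an event `B`. -/
noncomputable def condMean {Ω : Type*} [MeasurableSpace Ω]
    (P : Measure Ω) (Z : Ω → ℝ) (B : Set Ω) : ℝ :=
  (∫ ω in B, Z ω ∂P) / (P B).toReal

/-! Testing against bounded functions of `X` already pins down a version: `m ∘ X` is then
a.e. equal to the conditional expectation given `σ(X)`, and the pull-out property extends the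
defining identity to every integrable product `Z · h(X)`. The weighted mean
`E[S τ(X) (A / q(X)) Y]` is then computed by conditioning on `X` three times: within
`{S = 1, A = 1}` the outcome `Y` becomes `μ₁₁(X)`, within `{S = 1}` the treatment `A` becomes
`q(X)`, cancelling `1 / q(X)`, and in the whole population `S` becomes `g(X)`, so that
`S τ(X) = S (1 - g(X)) / g(X)` averages like `1 - S`. By (A4*) the resulting
`E[μ₁₁(X); S = 0]` is `E[Y¹; S = 0]`. -/

namespace IsVersion

variable {Ω E : Type*} [MeasurableSpace Ω] [MeasurableSpace E] {P : Measure Ω}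
  {X : Ω → E} {Z : Ω → ℝ} {B : Set Ω} {m : E → ℝ}

theorem setIntegral_preimage (hv : IsVersion P X Z B m) (hX : Measurable X) {t : Set E}
    (ht : MeasurableSet t) :
    ∫ ω in X ⁻¹' t, Z ω ∂P.restrict B = ∫ ω in X ⁻¹' t, m (X ω) ∂P.restrict B := by
  have hind : ∀ f : Ω → ℝ, (fun ω => f ω * t.indicator 1 (X ω)) = (X ⁻¹' t).indicator f := by
    intro f
    ext ω
    by_cases hω : X ω ∈ t <;> simp [hω]
  have key := hv.2 (t.indicator 1) (measurable_one.indicator ht)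
    ⟨1, fun x => by by_cases hx : x ∈ t <;> simp [hx]⟩
  rwa [hind Z, hind (fun ω => m (X ω)), integral_indicator (hX ht),
    integral_indicator (hX ht)] at key

theorem ae_eq_condExp [IsFiniteMeasure P] (hv : IsVersion P X Z B m) (hX : Measurable X)
    (hZ : Integrable Z (P.restrict B)) :
    (fun ω => m (X ω)) =ᵐ[P.restrict B] (P.restrict B)[Z | MeasurableSpace.comap X ‹_›] := by
  have hF := hX.comap_le
  have hT : ∀ n : ℕ, MeasurableSet {x | |m x| ≤ n} := fun n =>
    measurableSet_le hv.1.abs measurable_const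
  -- `m ∘ X` is bounded on `X ⁻¹' {|m| ≤ n}`, so there its set integrals are not the junk `0`.
  have hlocal : ∀ n : ℕ, (fun ω => m (X ω)) =ᵐ[(P.restrict B).restrict (X ⁻¹' {x | |m x| ≤ n})]
      (P.restrict B)[Z | MeasurableSpace.comap X ‹_›] := by
    intro n
    refine ae_eq_of_forall_setIntegral_eq_of_sigmaFinite' hF
      (fun s _ _ => Integrable.integrableOn ?_)
      (fun s _ _ => integrable_condExp.integrableOn.restrict) ?_
      (hv.1.comp (comap_measurable X)).stronglyMeasurable.aestronglyMeasurable
      stronglyMeasurable_condExp.aestronglyMeasurable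
    · refine Integrable.of_bound (hv.1.comp hX).aestronglyMeasurable n
        (ae_restrict_of_forall_mem (hX (hT n)) fun ω hω => ?_)
      simpa using hω
    · rintro _ ⟨t, ht, rfl⟩ -
      rw [Measure.restrict_restrict (hX ht), ← Set.preimage_inter,
        ← hv.setIntegral_preimage hX (ht.inter (hT n)),
        setIntegral_condExp hF hZ ⟨_, ht.inter (hT n), rfl⟩]
  have hcover : ⋃ n : ℕ, X ⁻¹' {x | |m x| ≤ n} = Set.univ :=
    Set.eq_univ_of_forall fun ω => Set.mem_iUnion.2 (exists_nat_ge |m (X ω)|)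
  have hall := (ae_restrict_iUnion_iff _ _).2 hlocal
  rwa [hcover, Measure.restrict_univ] at hall

theorem mul_comp_ae_eq_condExp [IsFiniteMeasure P] (hv : IsVersion P X Z B m) (hX : Measurable X)
    (hZ : Integrable Z (P.restrict B)) {h : E → ℝ} (hh : Measurable h)
    (hZh : Integrable (fun ω => Z ω * h (X ω)) (P.restrict B)) :
    (fun ω => m (X ω) * h (X ω)) =ᵐ[P.restrict B]
      (P.restrict B)[fun ω => Z ω * h (X ω) | MeasurableSpace.comap X ‹_›] := by
  have hhX : StronglyMeasurable[MeasurableSpace.comap X ‹_›] (fun ω => h (X ω)) :=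
    (hh.comp (comap_measurable X)).stronglyMeasurable
  filter_upwards [hv.ae_eq_condExp hX hZ,
    condExp_mul_of_stronglyMeasurable_right hhX hZh hZ] with ω hm hpull
  rw [hm]
  exact hpull.symm

theorem integrable_mul_comp [IsFiniteMeasure P] (hv : IsVersion P X Z B m) (hX : Measurable X)
    (hZ : Integrable Z (P.restrict B)) {h : E → ℝ} (hh : Measurable h)
    (hZh : Integrable (fun ω => Z ω * h (X ω)) (P.restrict B)) :
    Integrable (fun ω => m (X ω) * h (X ω)) (P.restrict B) :=
  integrable_condExp.congr (hv.mul_comp_ae_eq_condExp hX hZ hh hZh).symm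

theorem integral_mul_comp [IsFiniteMeasure P] (hv : IsVersion P X Z B m) (hX : Measurable X)
    (hZ : Integrable Z (P.restrict B)) {h : E → ℝ} (hh : Measurable h)
    (hZh : Integrable (fun ω => Z ω * h (X ω)) (P.restrict B)) :
    ∫ ω in B, Z ω * h (X ω) ∂P = ∫ ω in B, m (X ω) * h (X ω) ∂P := by
  rw [integral_congr_ae (hv.mul_comp_ae_eq_condExp hX hZ hh hZh), integral_condExp hX.comap_le]

end IsVersion

section ZeroOne

variable {α : Type*} {A : α → ℝ}

theorem mul_eq_indicator_of_zero_or_one (hA : ∀ a, A a = 0 ∨ A a = 1) (f : α → ℝ) :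
    (fun a => A a * f a) = {a | A a = 1}.indicator f := by
  ext a
  rcases hA a with h | h <;> simp [h]

variable [MeasurableSpace α] {μ : Measure α}

theorem measurableSet_eq_one (hAm : Measurable A) : MeasurableSet {a | A a = 1} :=
  hAm (measurableSet_singleton 1)

theorem integral_mul_of_zero_or_one (hAm : Measurable A) (hA : ∀ a, A a = 0 ∨ A a = 1)
    (f : α → ℝ) : ∫ a, A a * f a ∂μ = ∫ a in {a | A a = 1}, f a ∂μ := by
  rw [mul_eq_indicator_of_zero_or_one hA, integral_indicator (measurableSet_eq_one hAm)]

theorem integrable_mul_iff_of_zero_or_one (hAm : Measurable A) (hA : ∀ a, A a = 0 ∨ A a = 1)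
    {f : α → ℝ} : Integrable (fun a => A a * f a) μ ↔ IntegrableOn f {a | A a = 1} μ := by
  rw [mul_eq_indicator_of_zero_or_one hA, integrable_indicator_iff (measurableSet_eq_one hAm)]

theorem integrable_of_zero_or_one [IsFiniteMeasure μ] (hAm : Measurable A)
    (hA : ∀ a, A a = 0 ∨ A a = 1) : Integrable A μ :=
  .of_bound hAm.aestronglyMeasurable 1 <| ae_of_all _ fun a => by
    rcases hA a with h | h <;> simp [h]

end ZeroOne

section Weighting

variable {Ω E : Type*} [MeasurableSpace Ω] [MeasurableSpace E] {P : Measure Ω} [IsFiniteMeasure P]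
  {X : Ω → E}

theorem setIntegral_inverse_propensity_weight {A Y : Ω → ℝ} {B : Set Ω} {q μ1 w : E → ℝ}
    (hX : Measurable X) (hA : Measurable A) (hA01 : ∀ ω, A ω = 0 ∨ A ω = 1)
    (hq : IsVersion P X A B q) (hμ1 : IsVersion P X Y (B ∩ {ω | A ω = 1}) μ1)
    (hq0 : ∀ᵐ ω ∂P.restrict B, q (X ω) ≠ 0) (hY : Integrable Y P) (hw : Measurable w)
    (hint : IntegrableOn (fun ω => A ω * (Y ω * (w (X ω) / q (X ω)))) B P) :
    IntegrableOn (fun ω => w (X ω) * μ1 (X ω)) B P ∧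
      ∫ ω in B, A ω * (Y ω * (w (X ω) / q (X ω))) ∂P = ∫ ω in B, w (X ω) * μ1 (X ω) ∂P := by
  set k : E → ℝ := fun x => μ1 x * (w x / q x)
  have hwq : Measurable fun x => w x / q x := hw.div hq.1
  have hAint : Integrable A (P.restrict B) := integrable_of_zero_or_one hA hA01
  have htreated : (P.restrict B).restrict {ω | A ω = 1} = P.restrict (B ∩ {ω | A ω = 1}) := by
    rw [Measure.restrict_restrict (measurableSet_eq_one hA), Set.inter_comm]
  have hYint : IntegrableOn (fun ω => Y ω * (w (X ω) / q (X ω))) (B ∩ {ω | A ω = 1}) P := by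
    rw [IntegrableOn, ← htreated]
    exact (integrable_mul_iff_of_zero_or_one hA hA01).1 hint
  have hAk : IntegrableOn (fun ω => A ω * k (X ω)) B P := by
    refine (integrable_mul_iff_of_zero_or_one hA hA01).2 ?_
    rw [IntegrableOn, htreated]
    exact hμ1.integrable_mul_comp hX hY.integrableOn hwq hYint
  have hqk : (fun ω => q (X ω) * k (X ω)) =ᵐ[P.restrict B] fun ω => w (X ω) * μ1 (X ω) := by
    filter_upwards [hq0] with ω hω
    simp only [k]
    field_simp
  refine ⟨(hq.integrable_mul_comp hX hAint (hμ1.1.mul hwq) hAk).congr hqk, ?_⟩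
  calc ∫ ω in B, A ω * (Y ω * (w (X ω) / q (X ω))) ∂P
      = ∫ ω in B ∩ {ω | A ω = 1}, Y ω * (w (X ω) / q (X ω)) ∂P := by
        rw [integral_mul_of_zero_or_one hA hA01, htreated]
    _ = ∫ ω in B ∩ {ω | A ω = 1}, μ1 (X ω) * (w (X ω) / q (X ω)) ∂P :=
        hμ1.integral_mul_comp hX hY.integrableOn hwq hYint
    _ = ∫ ω in B, A ω * k (X ω) ∂P := by
        rw [integral_mul_of_zero_or_one hA hA01, htreated]
    _ = ∫ ω in B, q (X ω) * k (X ω) ∂P := hq.integral_mul_comp hX hAint (hμ1.1.mul hwq) hAk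
    _ = ∫ ω in B, w (X ω) * μ1 (X ω) ∂P := integral_congr_ae hqk

theorem setIntegral_odds_weight {S : Ω → ℝ} {g f : E → ℝ} (hX : Measurable X) (hS : Measurable S)
    (hS01 : ∀ ω, S ω = 0 ∨ S ω = 1) (hg : IsVersion P X S Set.univ g)
    (hg0 : ∀ᵐ ω ∂P, g (X ω) ≠ 0) (hf : Measurable f) (hfi : Integrable (fun ω => f (X ω)) P)
    (hτf : IntegrableOn (fun ω => (1 - g (X ω)) / g (X ω) * f (X ω)) {ω | S ω = 1} P) :
    ∫ ω in {ω | S ω = 1}, (1 - g (X ω)) / g (X ω) * f (X ω) ∂P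
      = ∫ ω in {ω | S ω = 0}, f (X ω) ∂P := by
  have hcompl : {ω | S ω = 1}ᶜ = {ω | S ω = 0} := by
    ext ω
    rcases hS01 ω with h | h <;> simp [h]
  have hsplit : (fun ω => f (X ω) / g (X ω))
      =ᵐ[P] fun ω => (1 - g (X ω)) / g (X ω) * f (X ω) + f (X ω) := by
    filter_upwards [hg0] with ω hω
    field_simp
    ring
  have hF : IntegrableOn (fun ω => f (X ω) / g (X ω)) {ω | S ω = 1} P :=
    (hτf.add hfi.integrableOn).congr (ae_restrict_of_ae hsplit.symm)
  have hSF : Integrable (fun ω => S ω * (f (X ω) / g (X ω))) (P.restrict Set.univ) := by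
    rw [Measure.restrict_univ]
    exact (integrable_mul_iff_of_zero_or_one hS hS01).2 hF
  have htotal : ∫ ω in {ω | S ω = 1}, f (X ω) / g (X ω) ∂P = ∫ ω, f (X ω) ∂P :=
    calc ∫ ω in {ω | S ω = 1}, f (X ω) / g (X ω) ∂P
        = ∫ ω in Set.univ, S ω * (f (X ω) / g (X ω)) ∂P := by
          rw [setIntegral_univ, integral_mul_of_zero_or_one hS hS01]
      _ = ∫ ω in Set.univ, g (X ω) * (f (X ω) / g (X ω)) ∂P :=
          hg.integral_mul_comp hX (integrable_of_zero_or_one hS hS01) (hf.div hg.1) hSF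
      _ = ∫ ω, f (X ω) ∂P := by
          rw [setIntegral_univ]
          exact integral_congr_ae (hg0.mono fun ω hω => mul_div_cancel₀ _ hω)
  have hsum : ∫ ω in {ω | S ω = 1}, f (X ω) / g (X ω) ∂P
      = ∫ ω in {ω | S ω = 1}, (1 - g (X ω)) / g (X ω) * f (X ω) ∂P
        + ∫ ω in {ω | S ω = 1}, f (X ω) ∂P := by
    rw [integral_congr_ae (ae_restrict_of_ae hsplit), integral_add hτf hfi.integrableOn]
  rw [← hcompl, setIntegral_compl (measurableSet_eq_one hS) hfi]
  linarith

end Weighting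

theorem identification_under_A4star_general
    {Ω E : Type*} [MeasurableSpace Ω] [MeasurableSpace E]
    (P : Measure Ω) [IsProbabilityMeasure P]
    (X : Ω → E) (S A Y Y1 : Ω → ℝ)
    (hX : Measurable X) (hS : Measurable S) (hA : Measurable A)
    (hS01 : ∀ ω, S ω = 0 ∨ S ω = 1) (hA01 : ∀ ω, A ω = 0 ∨ A ω = 1)
    (hYint : Integrable Y P)
    (g q μ11 : E → ℝ)
    (hg : IsVersion P X S Set.univ g)
    (hq : IsVersion P X A {ω | S ω = 1} q)
    -- (A2)
    (hμ11obs : IsVersion P X Y {ω | S ω = 1 ∧ A ω = 1} μ11)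
    -- (A3)
    (hA3 : ∀ᵐ ω ∂P, S ω = 1 → 0 < q (X ω) ∧ q (X ω) < 1)
    -- (A4*) μ₁₁ is also a version of E[Y¹ ∣ X; S = 0]
    (hA4star : IsVersion P X Y1 {ω | S ω = 0} μ11)
    -- (A5)
    (hA5 : ∀ᵐ ω ∂P, 0 < g (X ω))
    -- integrability of the expressions inside the expectations below
    (hint1 : Integrable (fun ω => μ11 (X ω)) P)
    (hint2 : Integrable (fun ω =>
      S ω * ((1 - g (X ω)) / g (X ω)) * (A ω / q (X ω)) * Y ω) P) :
    condMean P Y1 {ω | S ω = 0}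
      = condMean P (fun ω => μ11 (X ω)) {ω | S ω = 0} ∧
    condMean P Y1 {ω | S ω = 0}
      = (P {ω | S ω = 0}).toReal⁻¹ *
          ∫ ω, S ω * ((1 - g (X ω)) / g (X ω)) * (A ω / q (X ω)) * Y ω ∂P := by
  have hY1 : ∫ ω in {ω | S ω = 0}, Y1 ω ∂P = ∫ ω in {ω | S ω = 0}, μ11 (X ω) ∂P := by
    simpa using hA4star.2 1 measurable_const ⟨1, by simp⟩
  have hweight : ∫ ω, S ω * ((1 - g (X ω)) / g (X ω)) * (A ω / q (X ω)) * Y ω ∂P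
      = ∫ ω in {ω | S ω = 0}, μ11 (X ω) ∂P := by
    have hreorder : (fun ω => S ω * ((1 - g (X ω)) / g (X ω)) * (A ω / q (X ω)) * Y ω)
        = fun ω => S ω * (A ω * (Y ω * ((1 - g (X ω)) / g (X ω) / q (X ω)))) := by
      ext ω
      ring
    rw [hreorder] at hint2 ⊢
    have hq0 : ∀ᵐ ω ∂P.restrict {ω | S ω = 1}, q (X ω) ≠ 0 :=
      (ae_restrict_iff' (measurableSet_eq_one hS)).2 (hA3.mono fun ω h hS1 => (h hS1).1.ne')
    obtain ⟨hτμ, hipw⟩ := setIntegral_inverse_propensity_weight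
      (w := fun x => (1 - g x) / g x) hX hA hA01 hq hμ11obs hq0 hYint
      ((measurable_const.sub hg.1).div hg.1) ((integrable_mul_iff_of_zero_or_one hS hS01).1 hint2)
    rw [integral_mul_of_zero_or_one hS hS01, hipw]
    exact setIntegral_odds_weight hX hS hS01 hg (hA5.mono fun ω h => h.ne') hμ11obs.1 hint1 hτμ
  exact ⟨by rw [condMean, condMean, hY1], by rw [condMean, hY1, hweight, div_eq_inv_mul]⟩

/-- Identification under the transportability condition for difference effect measures
(Supplement G): under (A1), (A2), (A3), (A4*), (A5), (A6), with `τ = (1−g)/g`,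
`E[Y¹ ∣ S = 0] = E[μ₁₁(X) ∣ S = 0] = P(S=0)⁻¹·E[S·τ(X)·(A/q(X))·Y]`. -/
theorem identification_under_A4star
    {Ω E : Type*} [MeasurableSpace Ω] [MeasurableSpace E]
    (P : Measure Ω) [IsProbabilityMeasure P]
    (X : Ω → E) (S A Y Y0 Y1 : Ω → ℝ)
    (hX : Measurable X) (hS : Measurable S) (hA : Measurable A) (hY : Measurable Y)
    (hS01 : ∀ ω, S ω = 0 ∨ S ω = 1) (hA01 : ∀ ω, A ω = 0 ∨ A ω = 1)
    (hPS0 : 0 < P {ω | S ω = 0})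
    (hPS1A1 : 0 < P {ω | S ω = 1 ∧ A ω = 1})
    (hPS1A0 : 0 < P {ω | S ω = 1 ∧ A ω = 0})
    (hYint : Integrable Y P) (hY0int : Integrable Y0 P) (hY1int : Integrable Y1 P)
    (g q μ11 μ10 : E → ℝ)
    (hg : IsVersion P X S Set.univ g)
    (hg01 : ∀ᵐ ω ∂P, 0 < g (X ω) ∧ g (X ω) < 1)
    (hq : IsVersion P X A {ω | S ω = 1} q)
    -- (A1)
    (hA1 : ∀ᵐ ω ∂P, Y ω = A ω * Y1 ω + (1 - A ω) * Y0 ω)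
    -- (A2)
    (hμ11obs : IsVersion P X Y {ω | S ω = 1 ∧ A ω = 1} μ11)
    (hμ11cf : IsVersion P X Y1 {ω | S ω = 1} μ11)
    (hμ10obs : IsVersion P X Y {ω | S ω = 1 ∧ A ω = 0} μ10)
    (hμ10cf : IsVersion P X Y0 {ω | S ω = 1} μ10)
    -- (A3)
    (hA3 : ∀ᵐ ω ∂P, S ω = 1 → 0 < q (X ω) ∧ q (X ω) < 1)
    -- (A4*) μ₁₁ is also a version of E[Y¹ ∣ X; S = 0]
    (hA4star : IsVersion P X Y1 {ω | S ω = 0} μ11)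
    -- (A5)
    (hA5 : ∀ᵐ ω ∂P, 0 < g (X ω))
    -- (A6)
    (hA6 : ∀ᵐ ω ∂P, S ω = 0 → A ω = 0)
    -- integrability of the expressions inside the expectations below
    (hint1 : Integrable (fun ω => μ11 (X ω)) P)
    (hint2 : Integrable (fun ω =>
      S ω * ((1 - g (X ω)) / g (X ω)) * (A ω / q (X ω)) * Y ω) P) :
    condMean P Y1 {ω | S ω = 0}
      = condMean P (fun ω => μ11 (X ω)) {ω | S ω = 0} ∧
    condMean P Y1 {ω | S ω = 0}
      = (P {ω | S ω = 0}).toReal⁻¹ *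
          ∫ ω, S ω * ((1 - g (X ω)) / g (X ω)) * (A ω / q (X ω)) * Y ω ∂P :=
  identification_under_A4star_general P X S A Y Y1 hX hS hA hS01 hA01 hYint g q μ11 hg hq hμ11obs
    hA3 hA4star hA5 hint1 hint2
end

section
/- Identification of the control counterfactual mean and of the contrasts in Scenario 2 (Theorem 3): under conditions (A1) and (B1), E[Y⁰ | S = 0] = E[ μ₀₀(X) | S = 0 ]. Consequently, under conditions (A1)–(A5), (B1) and (B2), writing α₂ := E[(μ₁₁(X)/μ₁₀(X))·μ₀₀(X) | S = 0] and β₂ := E[μ₀₀(X) | S = 0], one has E[Y¹ − Y⁰ | S = 0] = α₂ − β₂, and if β₂ ≠ 0 then E[Y¹ | S = 0] / E[Y⁰ | S = 0] = α₂/β₂. -/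
/-!
Testing the defining identity of a version against `h ≡ 1` shows that a counterfactual and
its identifying function of `X` have the same mean on `{S = 0}`. For `Y⁰` this is `μ₀₀` by
(B1); for `Y¹` it is `ρ₁`, which (A4) rewrites as `(μ₁₁/μ₁₀)·μ₀₀` almost surely on `{S = 0}`.
The difference contrast then follows by linearity of the conditional mean.
-/

open MeasureTheory

section CondMean

variable {Ω : Type*} [MeasurableSpace Ω] {P : Measure Ω} {Z W : Ω → ℝ} {B : Set Ω}

theorem condMean_sub (hZ : IntegrableOn Z B P) (hW : IntegrableOn W B P) :
    condMean P (fun ω => Z ω - W ω) B = condMean P Z B - condMean P W B := by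
  rw [condMean, integral_sub hZ hW, sub_div]
  rfl

theorem condMean_congr_ae (hB : MeasurableSet B) (h : ∀ᵐ ω ∂P, ω ∈ B → Z ω = W ω) :
    condMean P Z B = condMean P W B := by
  rw [condMean, condMean, setIntegral_congr_ae hB h]

end CondMean

namespace IsVersion

variable {Ω E : Type*} [MeasurableSpace Ω] [MeasurableSpace E] {P : Measure Ω} {X : Ω → E}
  {Z : Ω → ℝ} {B : Set Ω} {m : E → ℝ}

theorem setIntegral_eq (hm : IsVersion P X Z B m) :
    ∫ ω in B, Z ω ∂P = ∫ ω in B, m (X ω) ∂P := by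
  simpa using hm.2 (fun _ => 1) measurable_const ⟨1, fun _ => by simp⟩

theorem condMean_eq (hm : IsVersion P X Z B m) :
    condMean P Z B = condMean P (fun ω => m (X ω)) B := by
  rw [condMean, condMean, hm.setIntegral_eq]

end IsVersion

theorem control_mean_and_contrasts_scenario2_general
    {Ω E : Type*} [MeasurableSpace Ω] [MeasurableSpace E]
    (P : Measure Ω)
    (X : Ω → E) (S A Y Y0 Y1 : Ω → ℝ)
    (hS : Measurable S)
    (hY0int : Integrable Y0 P) (hY1int : Integrable Y1 P)
    (g q μ11 μ10 μ00 ρ1 π : E → ℝ)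
    -- (B1, combined with A1)
    (hμ00cf : IsVersion P X Y0 {ω | S ω = 0} μ00) :
    -- under (A1) and (B1):
    condMean P Y0 {ω | S ω = 0} = condMean P (fun ω => μ00 (X ω)) {ω | S ω = 0} ∧
    -- under the remaining conditions (A2)–(A5) and (B2):
    (IsVersion P X S Set.univ g →
     (∀ᵐ ω ∂P, 0 < g (X ω) ∧ g (X ω) < 1) →
     IsVersion P X A {ω | S ω = 1} q →
     -- (A2)
     IsVersion P X Y {ω | S ω = 1 ∧ A ω = 1} μ11 →
     IsVersion P X Y1 {ω | S ω = 1} μ11 →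
     IsVersion P X Y {ω | S ω = 1 ∧ A ω = 0} μ10 →
     IsVersion P X Y0 {ω | S ω = 1} μ10 →
     -- (A3)
     (∀ᵐ ω ∂P, S ω = 1 → 0 < q (X ω) ∧ q (X ω) < 1) →
     -- (A4)
     IsVersion P X Y1 {ω | S ω = 0} ρ1 →
     (∀ᵐ ω ∂P, S ω = 0 →
       μ10 (X ω) ≠ 0 ∧ μ00 (X ω) ≠ 0 ∧
         μ11 (X ω) / μ10 (X ω) = ρ1 (X ω) / μ00 (X ω)) →
     -- (A5)
     (∀ᵐ ω ∂P, 0 < g (X ω)) →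
     -- (B2)
     IsVersion P X (fun ω => 1 - A ω) {ω | S ω = 0} π →
     (∀ᵐ ω ∂P, S ω = 0 → 0 < π (X ω) ∧ π (X ω) < 1) →
     (condMean P (fun ω => Y1 ω - Y0 ω) {ω | S ω = 0}
        = condMean P (fun ω => μ11 (X ω) / μ10 (X ω) * μ00 (X ω)) {ω | S ω = 0}
          - condMean P (fun ω => μ00 (X ω)) {ω | S ω = 0} ∧
      (condMean P (fun ω => μ00 (X ω)) {ω | S ω = 0} ≠ 0 →
        condMean P Y1 {ω | S ω = 0} / condMean P Y0 {ω | S ω = 0}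
          = condMean P (fun ω => μ11 (X ω) / μ10 (X ω) * μ00 (X ω)) {ω | S ω = 0}
            / condMean P (fun ω => μ00 (X ω)) {ω | S ω = 0}))) := by
  have hY0 := hμ00cf.condMean_eq
  refine ⟨hY0, fun _ _ _ _ _ _ _ _ hρ1 hA4 _ _ _ => ?_⟩
  have hρ1_eq : ∀ᵐ ω ∂P, ω ∈ {ω | S ω = 0} →
      ρ1 (X ω) = μ11 (X ω) / μ10 (X ω) * μ00 (X ω) := by
    filter_upwards [hA4] with ω hω hS0
    obtain ⟨-, hμ00_ne, hratio⟩ := hω hS0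
    rw [hratio, div_mul_cancel₀ _ hμ00_ne]
  have hY1 := hρ1.condMean_eq.trans (condMean_congr_ae (hS (measurableSet_singleton 0)) hρ1_eq)
  refine ⟨?_, fun _ => by rw [hY1, hY0]⟩
  rw [condMean_sub hY1int.integrableOn hY0int.integrableOn, hY1, hY0]

/-- Theorem 3, control mean and contrasts (Scenario 2).  Under (A1) and (B1) alone,
`E[Y⁰ ∣ S = 0] = E[μ₀₀(X) ∣ S = 0]`; consequently, under (A1)–(A5), (B1), (B2)
(the remaining conditions appear as hypotheses of the second conjunct), with
`α₂ = E[(μ₁₁(X)/μ₁₀(X))·μ₀₀(X) ∣ S = 0]` and `β₂ = E[μ₀₀(X) ∣ S = 0]`, one has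
`E[Y¹ − Y⁰ ∣ S = 0] = α₂ − β₂` and, if `β₂ ≠ 0`,
`E[Y¹ ∣ S = 0] / E[Y⁰ ∣ S = 0] = α₂ / β₂`. -/
theorem control_mean_and_contrasts_scenario2
    {Ω E : Type*} [MeasurableSpace Ω] [MeasurableSpace E]
    (P : Measure Ω) [IsProbabilityMeasure P]
    (X : Ω → E) (S A Y Y0 Y1 : Ω → ℝ)
    (hX : Measurable X) (hS : Measurable S) (hA : Measurable A) (hY : Measurable Y)
    (hS01 : ∀ ω, S ω = 0 ∨ S ω = 1) (hA01 : ∀ ω, A ω = 0 ∨ A ω = 1)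
    (hPS0 : 0 < P {ω | S ω = 0})
    (hPS1A1 : 0 < P {ω | S ω = 1 ∧ A ω = 1})
    (hPS1A0 : 0 < P {ω | S ω = 1 ∧ A ω = 0})
    (hYint : Integrable Y P) (hY0int : Integrable Y0 P) (hY1int : Integrable Y1 P)
    (g q μ11 μ10 μ00 ρ1 π : E → ℝ)
    -- integrability of the expressions inside the identifying expectations
    (hint1 : Integrable (fun ω => μ11 (X ω) / μ10 (X ω) * μ00 (X ω)) P)
    (hint2 : Integrable (fun ω => μ00 (X ω)) P)
    -- (A1) consistency
    (hA1 : ∀ᵐ ω ∂P, Y ω = A ω * Y1 ω + (1 - A ω) * Y0 ω)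
    -- (B1, combined with A1)
    (hPS0A0 : 0 < P {ω | S ω = 0 ∧ A ω = 0})
    (hμ00obs : IsVersion P X Y {ω | S ω = 0 ∧ A ω = 0} μ00)
    (hμ00cf : IsVersion P X Y0 {ω | S ω = 0} μ00) :
    -- under (A1) and (B1):
    condMean P Y0 {ω | S ω = 0} = condMean P (fun ω => μ00 (X ω)) {ω | S ω = 0} ∧
    -- under the remaining conditions (A2)–(A5) and (B2):
    (IsVersion P X S Set.univ g →
     (∀ᵐ ω ∂P, 0 < g (X ω) ∧ g (X ω) < 1) →
     IsVersion P X A {ω | S ω = 1} q →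
     -- (A2)
     IsVersion P X Y {ω | S ω = 1 ∧ A ω = 1} μ11 →
     IsVersion P X Y1 {ω | S ω = 1} μ11 →
     IsVersion P X Y {ω | S ω = 1 ∧ A ω = 0} μ10 →
     IsVersion P X Y0 {ω | S ω = 1} μ10 →
     -- (A3)
     (∀ᵐ ω ∂P, S ω = 1 → 0 < q (X ω) ∧ q (X ω) < 1) →
     -- (A4)
     IsVersion P X Y1 {ω | S ω = 0} ρ1 →
     (∀ᵐ ω ∂P, S ω = 0 →
       μ10 (X ω) ≠ 0 ∧ μ00 (X ω) ≠ 0 ∧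
         μ11 (X ω) / μ10 (X ω) = ρ1 (X ω) / μ00 (X ω)) →
     -- (A5)
     (∀ᵐ ω ∂P, 0 < g (X ω)) →
     -- (B2)
     IsVersion P X (fun ω => 1 - A ω) {ω | S ω = 0} π →
     (∀ᵐ ω ∂P, S ω = 0 → 0 < π (X ω) ∧ π (X ω) < 1) →
     (condMean P (fun ω => Y1 ω - Y0 ω) {ω | S ω = 0}
        = condMean P (fun ω => μ11 (X ω) / μ10 (X ω) * μ00 (X ω)) {ω | S ω = 0}
          - condMean P (fun ω => μ00 (X ω)) {ω | S ω = 0} ∧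
      (condMean P (fun ω => μ00 (X ω)) {ω | S ω = 0} ≠ 0 →
        condMean P Y1 {ω | S ω = 0} / condMean P Y0 {ω | S ω = 0}
          = condMean P (fun ω => μ11 (X ω) / μ10 (X ω) * μ00 (X ω)) {ω | S ω = 0}
            / condMean P (fun ω => μ00 (X ω)) {ω | S ω = 0}))) :=
  control_mean_and_contrasts_scenario2_general P X S A Y Y0 Y1 hS hY0int hY1int g q μ11 μ10 μ00 ρ1 π
    hμ00cf
end

section
/- Alternative identification formulas for Scenario 2 (Proposition in Supplement H): under conditions (A1)–(A5), (B1) and (B2), each of the following equals E[Y¹ | S = 0]: (i) E[ (μ₁₁(X)/μ₁₀(X)) · ((1−A)/π(X)) · Y | S = 0 ]; (ii) P(S=0)⁻¹ · E[ S · τ(X) · (A/q(X)) · (μ₀₀(X)/μ₁₀(X)) · Y ]; (iii) P(S=0)⁻¹ · E[ S · τ(X) · ((1−A)/(1−q(X))) · (μ₁₁(X)/μ₁₀(X)) · (μ₀₀(X)/μ₁₀(X)) · Y ]. -/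
open MeasureTheory

/-!
All three formulas reduce to `∫_{S=0} Y¹ = ∫_{S=0} k(X)` with `k = μ₀₀ μ₁₁ / μ₁₀`, which is (A4)
integrated against the version `ρ₁`. Each formula is an inverse propensity weighting: replacing `Y`
by its regression on the relevant arm and then the arm indicator by its propensity cancels the
weight. For (i) this happens inside `{S = 0}` and yields `k` at once; for (ii) and (iii) it
happens inside `{S = 1}` and leaves `∫_{S=1} τ(X) k(X)`, which the odds weight `τ = (1 - g)/g`
turns into `∫ (1 - g(X)) k(X) = ∫_{S=0} k(X)`.

A version is only tested against bounded functions; the identity extends to every measurable `φ`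
with `Z φ(X)` integrable by exhausting `Ω` with the sets where `|m(X)| ≤ n` and `|φ(X)| ≤ n`.
-/

open Filter Set

lemma measurableSet_abs_le_and_abs_le {α : Type*} [MeasurableSpace α] {f g : α → ℝ}
    (hf : Measurable f) (hg : Measurable g) (c : ℝ) :
    MeasurableSet {a | |f a| ≤ c ∧ |g a| ≤ c} :=
  (measurableSet_le hf.abs measurable_const).inter (measurableSet_le hg.abs measurable_const)

lemma aecover_abs_le_and_abs_le {α : Type*} [MeasurableSpace α] (μ : Measure α) {f g : α → ℝ}
    (hf : Measurable f) (hg : Measurable g) :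
    AECover μ atTop (fun n : ℕ => {a | |f a| ≤ n ∧ |g a| ≤ n}) where
  ae_eventually_mem := ae_of_all _ fun a =>
    (eventually_ge_atTop ⌈max |f a| |g a|⌉₊).mono fun n hn =>
      max_le_iff.mp ((Nat.le_ceil _).trans (by exact_mod_cast hn))
  measurableSet n := measurableSet_abs_le_and_abs_le hf hg n

lemma indicator_setOf_eq_one {α : Type*} {f : α → ℝ} (hf : ∀ a, f a = 0 ∨ f a = 1) :
    {a | f a = 1}.indicator 1 = f := by
  funext a
  rcases hf a with h | h <;> simp [h]

lemma compl_setOf_eq_one {α : Type*} {f : α → ℝ} (hf : ∀ a, f a = 0 ∨ f a = 1) :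
    {a | f a = 1}ᶜ = {a | f a = 0} := by
  ext a
  rcases hf a with h | h <;> simp [h]

lemma indicator_one_mul {α : Type*} (s : Set α) (f : α → ℝ) :
    (fun a => s.indicator 1 a * f a) = s.indicator f := by
  funext a
  by_cases ha : a ∈ s <;> simp [ha]

namespace IsVersion

variable {Ω E : Type*} [MeasurableSpace Ω] [MeasurableSpace E] {P : Measure Ω} {X : Ω → E}
  {Z : Ω → ℝ} {B T : Set Ω} {m : E → ℝ}

lemma setIntegral_comp_eq (hv : IsVersion P X Z B m) :
    ∫ ω in B, Z ω ∂P = ∫ ω in B, m (X ω) ∂P := by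
  simpa using hv.2 (fun _ => 1) measurable_const ⟨1, fun _ => by simp⟩

lemma setIntegral_preimage_mul_eq (hv : IsVersion P X Z B m) (hX : Measurable X) {K : Set E}
    (hK : MeasurableSet K) {ψ : E → ℝ} (hψ : Measurable ψ) {C : ℝ} (hψC : ∀ x ∈ K, |ψ x| ≤ C) :
    ∫ ω in X ⁻¹' K, Z ω * ψ (X ω) ∂P.restrict B =
      ∫ ω in X ⁻¹' K, m (X ω) * ψ (X ω) ∂P.restrict B := by
  have hbdd : ∀ x, |K.indicator ψ x| ≤ max C 0 := fun x => by
    by_cases hx : x ∈ K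
    · simpa [hx] using Or.inl (hψC x hx)
    · simp [hx]
  have key := hv.2 (K.indicator ψ) (hψ.indicator hK) ⟨_, hbdd⟩
  have hind : ∀ f : Ω → ℝ, (fun ω => f ω * K.indicator ψ (X ω)) =
      (X ⁻¹' K).indicator (fun ω => f ω * ψ (X ω)) := fun f => funext fun ω => by
    rw [indicator_mul_right, ← indicator_comp_right]; rfl
  rwa [hind Z, hind fun ω => m (X ω), integral_indicator (hX hK),
    integral_indicator (hX hK)] at key

variable [IsFiniteMeasure P]

lemma integrableOn_mul_comp (hv : IsVersion P X Z B m) (hX : Measurable X) {φ : E → ℝ}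
    (hφ : Measurable φ) (hZφ : IntegrableOn (fun ω => Z ω * φ (X ω)) B P) :
    IntegrableOn (fun ω => m (X ω) * φ (X ω)) B P := by
  have hcover := aecover_abs_le_and_abs_le (P.restrict B) (hv.1.comp hX) (hφ.comp hX)
  -- testing against `φ` times the sign of `m φ` turns `m φ` into `|m φ|`
  set σφ : E → ℝ := fun x => if 0 ≤ m x * φ x then φ x else -φ x
  have hσφ : Measurable σφ :=
    Measurable.ite (measurableSet_le measurable_const (hv.1.mul hφ)) hφ hφ.neg
  have habs x : |σφ x| = |φ x| := by simp only [σφ]; split_ifs <;> simp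
  have hmσφ x : m x * σφ x = |m x * φ x| := by
    simp only [σφ]; split_ifs with h
    · exact (abs_of_nonneg h).symm
    · rw [abs_of_neg (not_le.mp h)]; ring
  refine hcover.integrable_of_integral_norm_bounded (∫ ω in B, |Z ω * φ (X ω)| ∂P)
    (fun n => ?_) (Eventually.of_forall fun n => ?_)
  · refine Measure.integrableOn_of_bounded (M := n * n) (measure_ne_top _ _)
      ((hv.1.comp hX).mul (hφ.comp hX)).aestronglyMeasurable ?_
    filter_upwards [ae_restrict_mem (hcover.measurableSet n)] with ω hω
    rw [Real.norm_eq_abs, abs_mul]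
    exact mul_le_mul hω.1 hω.2 (abs_nonneg _) n.cast_nonneg
  · set K : Set E := {x | |m x| ≤ n ∧ |φ x| ≤ n}
    calc ∫ ω in X ⁻¹' K, ‖m (X ω) * φ (X ω)‖ ∂P.restrict B
          = ∫ ω in X ⁻¹' K, m (X ω) * σφ (X ω) ∂P.restrict B := by
            simp_rw [hmσφ, Real.norm_eq_abs]
        _ = ∫ ω in X ⁻¹' K, Z ω * σφ (X ω) ∂P.restrict B :=
            (hv.setIntegral_preimage_mul_eq hX (measurableSet_abs_le_and_abs_le hv.1 hφ n) hσφ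
              fun x hx => (habs x).le.trans hx.2).symm
        _ ≤ ∫ ω in X ⁻¹' K, |Z ω * σφ (X ω)| ∂P.restrict B :=
            (le_abs_self _).trans abs_integral_le_integral_abs
        _ = ∫ ω in X ⁻¹' K, |Z ω * φ (X ω)| ∂P.restrict B := by
            simp_rw [abs_mul, habs]
        _ ≤ ∫ ω in B, |Z ω * φ (X ω)| ∂P :=
            setIntegral_le_integral hZφ.abs (ae_of_all _ fun _ => abs_nonneg _)

lemma setIntegral_mul_comp_eq (hv : IsVersion P X Z B m) (hX : Measurable X) {φ : E → ℝ}
    (hφ : Measurable φ) (hZφ : IntegrableOn (fun ω => Z ω * φ (X ω)) B P) :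
    ∫ ω in B, Z ω * φ (X ω) ∂P = ∫ ω in B, m (X ω) * φ (X ω) ∂P := by
  have hcover := aecover_abs_le_and_abs_le (P.restrict B) (hv.1.comp hX) (hφ.comp hX)
  refine tendsto_nhds_unique (hcover.integral_tendsto_of_countably_generated hZφ) ?_
  refine (hcover.integral_tendsto_of_countably_generated
    (hv.integrableOn_mul_comp hX hφ hZφ)).congr fun n => ?_
  exact (hv.setIntegral_preimage_mul_eq hX (measurableSet_abs_le_and_abs_le hv.1 hφ n) hφ
    fun x hx => hx.2).symm

lemma integrableOn_comp (hv : IsVersion P X Z B m) (hX : Measurable X)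
    (hZ : IntegrableOn Z B P) : IntegrableOn (fun ω => m (X ω)) B P := by
  simpa using hv.integrableOn_mul_comp hX (φ := fun _ => 1) measurable_const (by simpa using hZ)

lemma compl (hv : IsVersion P X (T.indicator 1) B m) (hT : MeasurableSet T) (hX : Measurable X) :
    IsVersion P X (Tᶜ.indicator 1) B (fun x => 1 - m x) := by
  refine ⟨measurable_const.sub hv.1, fun h hh ⟨C, hC⟩ => ?_⟩
  have hhX : IntegrableOn (fun ω => h (X ω)) B P :=
    Integrable.of_bound (hh.comp hX).aestronglyMeasurable C (ae_of_all _ fun ω => hC _)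
  have hTh : IntegrableOn (fun ω => T.indicator 1 ω * h (X ω)) B P :=
    hhX.bdd_mul (c := 1) ((measurable_one.indicator hT).aestronglyMeasurable)
      (ae_of_all _ fun ω => by by_cases hω : ω ∈ T <;> simp [hω])
  have hmh := hv.integrableOn_mul_comp hX hh hTh
  calc ∫ ω in B, Tᶜ.indicator 1 ω * h (X ω) ∂P
        = ∫ ω in B, (h (X ω) - T.indicator 1 ω * h (X ω)) ∂P := by
          simp_rw [indicator_compl, Pi.sub_apply, Pi.one_apply, sub_mul, one_mul]
      _ = ∫ ω in B, (h (X ω) - m (X ω) * h (X ω)) ∂P := by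
          rw [integral_sub hhX hTh, integral_sub hhX hmh, hv.2 h hh ⟨C, hC⟩]
      _ = ∫ ω in B, (1 - m (X ω)) * h (X ω) ∂P := by simp_rw [sub_mul, one_mul]

lemma integrableOn_mul_of_integrableOn_inter (hv : IsVersion P X (T.indicator 1) B m)
    (hT : MeasurableSet T) (hX : Measurable X) {ψ : E → ℝ} (hψ : Measurable ψ)
    (hint : IntegrableOn (fun ω => ψ (X ω)) (B ∩ T) P) :
    IntegrableOn (fun ω => m (X ω) * ψ (X ω)) B P :=
  hv.integrableOn_mul_comp hX hψ <| by
    rwa [indicator_one_mul, integrableOn_indicator_iff hT, inter_comm]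

lemma setIntegral_inter_eq (hv : IsVersion P X (T.indicator 1) B m)
    (hT : MeasurableSet T) (hX : Measurable X) {ψ : E → ℝ} (hψ : Measurable ψ)
    (hint : IntegrableOn (fun ω => ψ (X ω)) (B ∩ T) P) :
    ∫ ω in B ∩ T, ψ (X ω) ∂P = ∫ ω in B, m (X ω) * ψ (X ω) ∂P := by
  rw [← hv.setIntegral_mul_comp_eq hX hψ, indicator_one_mul, setIntegral_indicator hT]
  rwa [indicator_one_mul, integrableOn_indicator_iff hT, inter_comm]

section InversePropensityWeighting

variable {Y : Ω → ℝ} {μ p ψ : E → ℝ}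

lemma integrableOn_mul_of_integrableOn_inter_mul_div (hμ : IsVersion P X Y (B ∩ T) μ)
    (hp : IsVersion P X (T.indicator 1) B p) (hB : MeasurableSet B) (hT : MeasurableSet T)
    (hX : Measurable X) (hp0 : ∀ᵐ ω ∂P, ω ∈ B → p (X ω) ≠ 0) (hψ : Measurable ψ)
    (hint : IntegrableOn (fun ω => Y ω * (ψ (X ω) / p (X ω))) (B ∩ T) P) :
    IntegrableOn (fun ω => μ (X ω) * ψ (X ω)) B P := by
  have hψp : Measurable fun x => ψ x / p x := hψ.div hp.1
  refine (hp.integrableOn_mul_of_integrableOn_inter hT hX (ψ := fun x => μ x * (ψ x / p x))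
    (hμ.1.mul hψp) (hμ.integrableOn_mul_comp hX hψp hint)).congr ?_
  refine (ae_restrict_iff' hB).2 (hp0.mono fun ω h hω => ?_)
  field_simp [h hω]

lemma setIntegral_inter_mul_div_eq (hμ : IsVersion P X Y (B ∩ T) μ)
    (hp : IsVersion P X (T.indicator 1) B p) (hB : MeasurableSet B) (hT : MeasurableSet T)
    (hX : Measurable X) (hp0 : ∀ᵐ ω ∂P, ω ∈ B → p (X ω) ≠ 0) (hψ : Measurable ψ)
    (hint : IntegrableOn (fun ω => Y ω * (ψ (X ω) / p (X ω))) (B ∩ T) P) :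
    ∫ ω in B ∩ T, Y ω * (ψ (X ω) / p (X ω)) ∂P = ∫ ω in B, μ (X ω) * ψ (X ω) ∂P := by
  have hψp : Measurable fun x => ψ x / p x := hψ.div hp.1
  rw [hμ.setIntegral_mul_comp_eq hX hψp hint,
    hp.setIntegral_inter_eq hT hX (ψ := fun x => μ x * (ψ x / p x)) (hμ.1.mul hψp)
      (hμ.integrableOn_mul_comp hX hψp hint)]
  refine setIntegral_congr_ae hB (hp0.mono fun ω h hω => ?_)
  field_simp [h hω]

end InversePropensityWeighting

lemma setIntegral_odds_mul_eq {g φ : E → ℝ} (hg : IsVersion P X (T.indicator 1) univ g)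
    (hT : MeasurableSet T) (hX : Measurable X) (hg0 : ∀ᵐ ω ∂P, g (X ω) ≠ 0) (hφ : Measurable φ)
    (h1 : IntegrableOn (fun ω => (1 - g (X ω)) / g (X ω) * φ (X ω)) T P)
    (h0 : IntegrableOn (fun ω => φ (X ω)) Tᶜ P) :
    ∫ ω in T, (1 - g (X ω)) / g (X ω) * φ (X ω) ∂P = ∫ ω in Tᶜ, φ (X ω) ∂P := by
  have hτφ : Measurable fun x => (1 - g x) / g x * φ x :=
    ((measurable_const.sub hg.1).div hg.1).mul hφ
  calc ∫ ω in T, (1 - g (X ω)) / g (X ω) * φ (X ω) ∂P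
        = ∫ ω, g (X ω) * ((1 - g (X ω)) / g (X ω) * φ (X ω)) ∂P := by
          simpa using hg.setIntegral_inter_eq hT hX hτφ (by simpa using h1)
      _ = ∫ ω, (1 - g (X ω)) * φ (X ω) ∂P :=
          integral_congr_ae (hg0.mono fun ω h => by field_simp)
      _ = ∫ ω in Tᶜ, φ (X ω) ∂P := by
          simpa using
            ((hg.compl hT hX).setIntegral_inter_eq hT.compl hX hφ (by simpa using h0)).symm

end IsVersion

lemma indicator_setOf_eq_zero {α : Type*} {f : α → ℝ} (hf : ∀ a, f a = 0 ∨ f a = 1) :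
    {a | f a = 0}.indicator 1 = fun a => 1 - f a := by
  rw [← compl_setOf_eq_one hf, indicator_compl, indicator_setOf_eq_one hf]
  rfl

section Scenario2

variable {Ω E : Type*} [MeasurableSpace Ω] [MeasurableSpace E] {P : Measure Ω}
  [IsFiniteMeasure P] {X : Ω → E} {S A Y : Ω → ℝ} {μ11 μ10 μ00 w : E → ℝ}

lemma setIntegral_control_ipw_eq {B : Set Ω} {π : E → ℝ} (hB : MeasurableSet B)
    (hX : Measurable X) (hA : Measurable A) (hA01 : ∀ ω, A ω = 0 ∨ A ω = 1)
    (hμ11 : Measurable μ11) (hμ10 : Measurable μ10)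
    (hμ00 : IsVersion P X Y (B ∩ {ω | A ω = 0}) μ00)
    (hπ : IsVersion P X (fun ω => 1 - A ω) B π) (hπ0 : ∀ᵐ ω ∂P, ω ∈ B → π (X ω) ≠ 0)
    (hint : IntegrableOn (fun ω => μ11 (X ω) / μ10 (X ω) * ((1 - A ω) / π (X ω)) * Y ω) B P) :
    ∫ ω in B, μ11 (X ω) / μ10 (X ω) * ((1 - A ω) / π (X ω)) * Y ω ∂P =
      ∫ ω in B, μ00 (X ω) * (μ11 (X ω) / μ10 (X ω)) ∂P := by
  have hA0 : MeasurableSet {ω | A ω = 0} := hA (measurableSet_singleton 0)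
  have hind : (fun ω => μ11 (X ω) / μ10 (X ω) * ((1 - A ω) / π (X ω)) * Y ω) =
      {ω | A ω = 0}.indicator fun ω => Y ω * (μ11 (X ω) / μ10 (X ω) / π (X ω)) := by
    funext ω
    rcases hA01 ω with h | h <;> simp [h]
    ring
  rw [hind, integrableOn_indicator_iff hA0, inter_comm] at hint
  rw [hind, setIntegral_indicator hA0]
  rw [← indicator_setOf_eq_zero hA01] at hπ
  exact hμ00.setIntegral_inter_mul_div_eq hπ hB hA0 hX hπ0 (hμ11.div hμ10) hint

lemma integral_treated_ipw_eq {q : E → ℝ} (hX : Measurable X) (hS : Measurable S)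
    (hA : Measurable A) (hS01 : ∀ ω, S ω = 0 ∨ S ω = 1) (hA01 : ∀ ω, A ω = 0 ∨ A ω = 1)
    (hw : Measurable w) (hμ10 : Measurable μ10) (hμ00 : Measurable μ00)
    (hμ11 : IsVersion P X Y {ω | S ω = 1 ∧ A ω = 1} μ11)
    (hq : IsVersion P X A {ω | S ω = 1} q) (hq0 : ∀ᵐ ω ∂P, S ω = 1 → q (X ω) ≠ 0)
    (hint : Integrable
      (fun ω => S ω * w (X ω) * (A ω / q (X ω)) * (μ00 (X ω) / μ10 (X ω)) * Y ω) P) :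
    IntegrableOn (fun ω => w (X ω) * (μ00 (X ω) * (μ11 (X ω) / μ10 (X ω)))) {ω | S ω = 1} P ∧
    ∫ ω, S ω * w (X ω) * (A ω / q (X ω)) * (μ00 (X ω) / μ10 (X ω)) * Y ω ∂P =
      ∫ ω in {ω | S ω = 1}, w (X ω) * (μ00 (X ω) * (μ11 (X ω) / μ10 (X ω))) ∂P := by
  have hS1 : MeasurableSet {ω | S ω = 1} := hS (measurableSet_singleton 1)
  have hA1 : MeasurableSet {ω | A ω = 1} := hA (measurableSet_singleton 1)
  have hind : (fun ω => S ω * w (X ω) * (A ω / q (X ω)) * (μ00 (X ω) / μ10 (X ω)) * Y ω) =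
      ({ω | S ω = 1} ∩ {ω | A ω = 1}).indicator
        fun ω => Y ω * (w (X ω) * (μ00 (X ω) / μ10 (X ω)) / q (X ω)) := by
    funext ω
    rcases hS01 ω with h | h <;> rcases hA01 ω with h' | h' <;> simp [h, h']
    ring
  have hrw (ω : Ω) : μ11 (X ω) * (w (X ω) * (μ00 (X ω) / μ10 (X ω))) =
      w (X ω) * (μ00 (X ω) * (μ11 (X ω) / μ10 (X ω))) := by ring
  rw [hind, integrable_indicator_iff (hS1.inter hA1)] at hint
  rw [hind, integral_indicator (hS1.inter hA1)]
  rw [← indicator_setOf_eq_one hA01] at hq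
  simp_rw [← hrw]
  exact ⟨hμ11.integrableOn_mul_of_integrableOn_inter_mul_div hq hS1 hA1 hX hq0
    (hw.mul (hμ00.div hμ10)) hint,
    hμ11.setIntegral_inter_mul_div_eq hq hS1 hA1 hX hq0 (hw.mul (hμ00.div hμ10)) hint⟩

lemma integral_control_ipw_eq {q : E → ℝ} (hX : Measurable X) (hS : Measurable S)
    (hA : Measurable A) (hS01 : ∀ ω, S ω = 0 ∨ S ω = 1) (hA01 : ∀ ω, A ω = 0 ∨ A ω = 1)
    (hw : Measurable w) (hμ11 : Measurable μ11) (hμ00 : Measurable μ00)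
    (hμ10 : IsVersion P X Y {ω | S ω = 1 ∧ A ω = 0} μ10)
    (hq : IsVersion P X A {ω | S ω = 1} q) (hq1 : ∀ᵐ ω ∂P, S ω = 1 → 1 - q (X ω) ≠ 0)
    (hint : Integrable (fun ω => S ω * w (X ω) * ((1 - A ω) / (1 - q (X ω))) *
      (μ11 (X ω) / μ10 (X ω)) * (μ00 (X ω) / μ10 (X ω)) * Y ω) P) :
    IntegrableOn (fun ω => w (X ω) * (μ00 (X ω) * (μ11 (X ω) / μ10 (X ω)))) {ω | S ω = 1} P ∧
    ∫ ω, S ω * w (X ω) * ((1 - A ω) / (1 - q (X ω))) *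
        (μ11 (X ω) / μ10 (X ω)) * (μ00 (X ω) / μ10 (X ω)) * Y ω ∂P =
      ∫ ω in {ω | S ω = 1}, w (X ω) * (μ00 (X ω) * (μ11 (X ω) / μ10 (X ω))) ∂P := by
  have hS1 : MeasurableSet {ω | S ω = 1} := hS (measurableSet_singleton 1)
  have hA1 : MeasurableSet {ω | A ω = 1} := hA (measurableSet_singleton 1)
  have hA0 : MeasurableSet {ω | A ω = 0} := hA (measurableSet_singleton 0)
  have hind : (fun ω => S ω * w (X ω) * ((1 - A ω) / (1 - q (X ω))) *
        (μ11 (X ω) / μ10 (X ω)) * (μ00 (X ω) / μ10 (X ω)) * Y ω) =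
      ({ω | S ω = 1} ∩ {ω | A ω = 0}).indicator fun ω => Y ω *
        (w (X ω) * (μ11 (X ω) / μ10 (X ω)) * (μ00 (X ω) / μ10 (X ω)) / (1 - q (X ω))) := by
    funext ω
    rcases hS01 ω with h | h <;> rcases hA01 ω with h' | h' <;> simp [h, h']
    ring
  -- also where `μ10` vanishes: both sides are then `0`, as `x / 0 = 0`
  have hrw (ω : Ω) : μ10 (X ω) * (w (X ω) * (μ11 (X ω) / μ10 (X ω)) * (μ00 (X ω) / μ10 (X ω))) =
      w (X ω) * (μ00 (X ω) * (μ11 (X ω) / μ10 (X ω))) := by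
    rcases eq_or_ne (μ10 (X ω)) 0 with h | h
    · simp [h]
    · field_simp
  rw [hind, integrable_indicator_iff (hS1.inter hA0)] at hint
  rw [hind, integral_indicator (hS1.inter hA0)]
  have hq' := (indicator_setOf_eq_one hA01 ▸ hq).compl hA1 hX
  rw [compl_setOf_eq_one hA01] at hq'
  have hψ : Measurable fun x => w x * (μ11 x / μ10 x) * (μ00 x / μ10 x) :=
    (hw.mul (hμ11.div hμ10.1)).mul (hμ00.div hμ10.1)
  simp_rw [← hrw]
  exact ⟨hμ10.integrableOn_mul_of_integrableOn_inter_mul_div hq' hS1 hA0 hX hq1 hψ hint,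
    hμ10.setIntegral_inter_mul_div_eq hq' hS1 hA0 hX hq1 hψ hint⟩

end Scenario2

theorem alternative_identification_scenario2_general
    {Ω E : Type*} [MeasurableSpace Ω] [MeasurableSpace E]
    (P : Measure Ω) [IsProbabilityMeasure P]
    (X : Ω → E) (S A Y Y1 : Ω → ℝ)
    (hX : Measurable X) (hS : Measurable S) (hA : Measurable A)
    (hS01 : ∀ ω, S ω = 0 ∨ S ω = 1) (hA01 : ∀ ω, A ω = 0 ∨ A ω = 1)
    (hY1int : Integrable Y1 P)
    (g q μ11 μ10 μ00 ρ1 π : E → ℝ)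
    (hg : IsVersion P X S Set.univ g)
    (hq : IsVersion P X A {ω | S ω = 1} q)
    -- (A2)
    (hμ11obs : IsVersion P X Y {ω | S ω = 1 ∧ A ω = 1} μ11)
    (hμ10obs : IsVersion P X Y {ω | S ω = 1 ∧ A ω = 0} μ10)
    -- (A3)
    (hA3 : ∀ᵐ ω ∂P, S ω = 1 → 0 < q (X ω) ∧ q (X ω) < 1)
    -- (A5)
    (hA5 : ∀ᵐ ω ∂P, 0 < g (X ω))
    -- (B1, combined with A1)
    (hμ00obs : IsVersion P X Y {ω | S ω = 0 ∧ A ω = 0} μ00)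
    -- (A4)
    (hρ1 : IsVersion P X Y1 {ω | S ω = 0} ρ1)
    (hA4 : ∀ᵐ ω ∂P, S ω = 0 →
      μ10 (X ω) ≠ 0 ∧ μ00 (X ω) ≠ 0 ∧
        μ11 (X ω) / μ10 (X ω) = ρ1 (X ω) / μ00 (X ω))
    -- (B2)
    (hπ : IsVersion P X (fun ω => 1 - A ω) {ω | S ω = 0} π)
    (hπ01 : ∀ᵐ ω ∂P, S ω = 0 → 0 < π (X ω) ∧ π (X ω) < 1)
    -- integrability of the expressions inside the expectations below
    (hint1 : Integrable (fun ω =>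
      μ11 (X ω) / μ10 (X ω) * ((1 - A ω) / π (X ω)) * Y ω) P)
    (hint2 : Integrable (fun ω =>
      S ω * ((1 - g (X ω)) / g (X ω)) * (A ω / q (X ω)) *
        (μ00 (X ω) / μ10 (X ω)) * Y ω) P)
    (hint3 : Integrable (fun ω =>
      S ω * ((1 - g (X ω)) / g (X ω)) * ((1 - A ω) / (1 - q (X ω))) *
        (μ11 (X ω) / μ10 (X ω)) * (μ00 (X ω) / μ10 (X ω)) * Y ω) P) :
    condMean P Y1 {ω | S ω = 0}
      = condMean P (fun ω => μ11 (X ω) / μ10 (X ω) * ((1 - A ω) / π (X ω)) * Y ω)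
          {ω | S ω = 0} ∧
    condMean P Y1 {ω | S ω = 0}
      = (P {ω | S ω = 0}).toReal⁻¹ *
          ∫ ω, S ω * ((1 - g (X ω)) / g (X ω)) * (A ω / q (X ω)) *
            (μ00 (X ω) / μ10 (X ω)) * Y ω ∂P ∧
    condMean P Y1 {ω | S ω = 0}
      = (P {ω | S ω = 0}).toReal⁻¹ *
          ∫ ω, S ω * ((1 - g (X ω)) / g (X ω)) * ((1 - A ω) / (1 - q (X ω))) *
            (μ11 (X ω) / μ10 (X ω)) * (μ00 (X ω) / μ10 (X ω)) * Y ω ∂P := by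
  have hS0 : MeasurableSet {ω | S ω = 0} := hS (measurableSet_singleton 0)
  have hk : ∀ᵐ ω ∂P, ω ∈ {ω | S ω = 0} →
      ρ1 (X ω) = μ00 (X ω) * (μ11 (X ω) / μ10 (X ω)) :=
    hA4.mono fun ω h hω => by obtain ⟨-, h00, h⟩ := h hω; rw [h]; field_simp
  have hY1 : ∫ ω in {ω | S ω = 0}, Y1 ω ∂P =
      ∫ ω in {ω | S ω = 0}, μ00 (X ω) * (μ11 (X ω) / μ10 (X ω)) ∂P :=
    hρ1.setIntegral_comp_eq.trans (setIntegral_congr_ae hS0 hk)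
  have hodds (h : IntegrableOn (fun ω => (1 - g (X ω)) / g (X ω) *
      (μ00 (X ω) * (μ11 (X ω) / μ10 (X ω)))) {ω | S ω = 1} P) :
      ∫ ω in {ω | S ω = 1}, (1 - g (X ω)) / g (X ω) *
        (μ00 (X ω) * (μ11 (X ω) / μ10 (X ω))) ∂P = ∫ ω in {ω | S ω = 0}, Y1 ω ∂P := by
    rw [hY1, ← compl_setOf_eq_one hS01]
    refine (indicator_setOf_eq_one hS01 ▸ hg).setIntegral_odds_mul_eq
      (hS (measurableSet_singleton 1)) hX (hA5.mono fun _ h => h.ne')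
      (hμ00obs.1.mul (hμ11obs.1.div hμ10obs.1)) h ?_
    rw [compl_setOf_eq_one hS01]
    exact (hρ1.integrableOn_comp hX hY1int.integrableOn).congr ((ae_restrict_iff' hS0).2 hk)
  have hτ : Measurable fun x => (1 - g x) / g x := (measurable_const.sub hg.1).div hg.1
  obtain ⟨hτk2, h2⟩ := integral_treated_ipw_eq hX hS hA hS01 hA01 hτ hμ10obs.1
    hμ00obs.1 hμ11obs hq (hA3.mono fun _ h hω => (h hω).1.ne') hint2
  obtain ⟨hτk3, h3⟩ := integral_control_ipw_eq hX hS hA hS01 hA01 hτ hμ11obs.1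
    hμ00obs.1 hμ10obs hq (hA3.mono fun _ h hω => (sub_pos.2 (h hω).2).ne') hint3
  refine ⟨?_, ?_, ?_⟩
  · rw [condMean, condMean, setIntegral_control_ipw_eq hS0 hX hA hA01 hμ11obs.1 hμ10obs.1
      hμ00obs hπ (hπ01.mono fun _ h hω => (h hω).1.ne') hint1.integrableOn, hY1]
  · rw [condMean, h2, hodds hτk2, div_eq_inv_mul]
  · rw [condMean, h3, hodds hτk3, div_eq_inv_mul]

/-- Alternative identification formulas for Scenario 2 (Supplement H).  Under
(A1)–(A5), (B1), (B2), with `τ = (1−g)/g`, each of the following equals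
`E[Y¹ ∣ S = 0]`:
(i) `E[(μ₁₁(X)/μ₁₀(X))·((1−A)/π(X))·Y ∣ S = 0]`;
(ii) `P(S=0)⁻¹·E[S·τ(X)·(A/q(X))·(μ₀₀(X)/μ₁₀(X))·Y]`;
(iii) `P(S=0)⁻¹·E[S·τ(X)·((1−A)/(1−q(X)))·(μ₁₁(X)/μ₁₀(X))·(μ₀₀(X)/μ₁₀(X))·Y]`. -/
theorem alternative_identification_scenario2
    {Ω E : Type*} [MeasurableSpace Ω] [MeasurableSpace E]
    (P : Measure Ω) [IsProbabilityMeasure P]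
    (X : Ω → E) (S A Y Y0 Y1 : Ω → ℝ)
    (hX : Measurable X) (hS : Measurable S) (hA : Measurable A) (hY : Measurable Y)
    (hS01 : ∀ ω, S ω = 0 ∨ S ω = 1) (hA01 : ∀ ω, A ω = 0 ∨ A ω = 1)
    (hPS0 : 0 < P {ω | S ω = 0})
    (hPS1A1 : 0 < P {ω | S ω = 1 ∧ A ω = 1})
    (hPS1A0 : 0 < P {ω | S ω = 1 ∧ A ω = 0})
    (hYint : Integrable Y P) (hY0int : Integrable Y0 P) (hY1int : Integrable Y1 P)
    (g q μ11 μ10 μ00 ρ1 π : E → ℝ)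
    (hg : IsVersion P X S Set.univ g)
    (hg01 : ∀ᵐ ω ∂P, 0 < g (X ω) ∧ g (X ω) < 1)
    (hq : IsVersion P X A {ω | S ω = 1} q)
    -- (A1)
    (hA1 : ∀ᵐ ω ∂P, Y ω = A ω * Y1 ω + (1 - A ω) * Y0 ω)
    -- (A2)
    (hμ11obs : IsVersion P X Y {ω | S ω = 1 ∧ A ω = 1} μ11)
    (hμ11cf : IsVersion P X Y1 {ω | S ω = 1} μ11)
    (hμ10obs : IsVersion P X Y {ω | S ω = 1 ∧ A ω = 0} μ10)
    (hμ10cf : IsVersion P X Y0 {ω | S ω = 1} μ10)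
    -- (A3)
    (hA3 : ∀ᵐ ω ∂P, S ω = 1 → 0 < q (X ω) ∧ q (X ω) < 1)
    -- (A5)
    (hA5 : ∀ᵐ ω ∂P, 0 < g (X ω))
    -- (B1, combined with A1)
    (hPS0A0 : 0 < P {ω | S ω = 0 ∧ A ω = 0})
    (hμ00obs : IsVersion P X Y {ω | S ω = 0 ∧ A ω = 0} μ00)
    (hμ00cf : IsVersion P X Y0 {ω | S ω = 0} μ00)
    -- (A4)
    (hρ1 : IsVersion P X Y1 {ω | S ω = 0} ρ1)
    (hA4 : ∀ᵐ ω ∂P, S ω = 0 →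
      μ10 (X ω) ≠ 0 ∧ μ00 (X ω) ≠ 0 ∧
        μ11 (X ω) / μ10 (X ω) = ρ1 (X ω) / μ00 (X ω))
    -- (B2)
    (hπ : IsVersion P X (fun ω => 1 - A ω) {ω | S ω = 0} π)
    (hπ01 : ∀ᵐ ω ∂P, S ω = 0 → 0 < π (X ω) ∧ π (X ω) < 1)
    -- integrability of the expressions inside the expectations below
    (hint1 : Integrable (fun ω =>
      μ11 (X ω) / μ10 (X ω) * ((1 - A ω) / π (X ω)) * Y ω) P)
    (hint2 : Integrable (fun ω =>
      S ω * ((1 - g (X ω)) / g (X ω)) * (A ω / q (X ω)) *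
        (μ00 (X ω) / μ10 (X ω)) * Y ω) P)
    (hint3 : Integrable (fun ω =>
      S ω * ((1 - g (X ω)) / g (X ω)) * ((1 - A ω) / (1 - q (X ω))) *
        (μ11 (X ω) / μ10 (X ω)) * (μ00 (X ω) / μ10 (X ω)) * Y ω) P) :
    condMean P Y1 {ω | S ω = 0}
      = condMean P (fun ω => μ11 (X ω) / μ10 (X ω) * ((1 - A ω) / π (X ω)) * Y ω)
          {ω | S ω = 0} ∧
    condMean P Y1 {ω | S ω = 0}
      = (P {ω | S ω = 0}).toReal⁻¹ *
          ∫ ω, S ω * ((1 - g (X ω)) / g (X ω)) * (A ω / q (X ω)) *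
            (μ00 (X ω) / μ10 (X ω)) * Y ω ∂P ∧
    condMean P Y1 {ω | S ω = 0}
      = (P {ω | S ω = 0}).toReal⁻¹ *
          ∫ ω, S ω * ((1 - g (X ω)) / g (X ω)) * ((1 - A ω) / (1 - q (X ω))) *
            (μ11 (X ω) / μ10 (X ω)) * (μ00 (X ω) / μ10 (X ω)) * Y ω ∂P :=
  alternative_identification_scenario2_general P X S A Y Y1 hX hS hA hS01 hA01 hY1int g q μ11 μ10
    μ00 ρ1 π hg hq hμ11obs hμ10obs hA3 hA5 hμ00obs hρ1 hA4 hπ hπ01 hint1 hint2 hint3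
end
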